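/- If P is a polytope in ℝ^m containing the origin and L is a linear subspace of ℝ^m, then the orthogonal projection of the polar set P° onto L equals (P ∩ L)° ∩ L, where polarity is taken in ℝ^m. -/

import Mathlib

/-!
For `⊆`, the orthogonal projection is self-adjoint and fixes `L`. For `⊇`, given `z ∈ L` with
`⟪z, y⟫ ≤ 1` on `P ∩ L`, we look for `w ⊥ L` with `⟪z + w, s⟫ ≤ 1` at every generator `s` of
`P`. By Farkas' lemma such a `w` exists unless some nonnegative combination of the components of
the generators orthogonal to `L` vanishes while violating the inequalities; normalised, such a
combination is a point of `P ∩ L` at which `⟪z, ·⟫ > 1`. Farkas' lemma follows from Hahn–Banach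
separation once finitely generated cones are known to be closed: by Carathéodory's theorem for
cones, such a cone is a finite union of cones on linearly independent families, each of which is
a linear image of a closed orthant.
-/

open RealInnerProductSpace

/-- Polar set: `{x | ⟪x, y⟫ ≤ 1 for all y ∈ P}`. -/
def polarSet {m : ℕ} (P : Set (EuclideanSpace ℝ (Fin m))) : Set (EuclideanSpace ℝ (Fin m)) :=
  {x | ∀ y ∈ P, ⟪x, y⟫ ≤ 1}

namespace PointedCone

section Caratheodory

variable {𝕜 M ι : Type*} [Field 𝕜] [LinearOrder 𝕜] [IsStrictOrderedRing 𝕜]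
  [AddCommGroup M] [Module 𝕜 M] {v : ι → M} {s : Finset ι} {x : M}

theorem mem_hull_image_finset_iff :
    x ∈ hull 𝕜 (v '' s) ↔ ∃ c : ι → 𝕜, (∀ i ∈ s, 0 ≤ c i) ∧ ∑ i ∈ s, c i • v i = x := by
  rw [Submodule.mem_span_image_finset_iff_exists_fun']
  constructor
  · rintro ⟨c, rfl⟩
    exact ⟨fun i ↦ c i, fun i _ ↦ (c i).2, rfl⟩
  · rintro ⟨c, hc, rfl⟩
    refine ⟨fun i ↦ ⟨max (c i) 0, le_max_right _ _⟩, Finset.sum_congr rfl fun i hi ↦ ?_⟩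
    rw [Nonneg.mk_smul, max_eq_left (hc i hi)]

theorem mem_hull_range_iff [Fintype ι] :
    x ∈ hull 𝕜 (Set.range v) ↔ ∃ c : ι → 𝕜, (∀ i, 0 ≤ c i) ∧ ∑ i, c i • v i = x := by
  simpa using mem_hull_image_finset_iff (v := v) (s := Finset.univ) (x := x)

theorem exists_mem_hull_image_erase [DecidableEq ι] (hs : ¬LinearIndepOn 𝕜 v s)
    (hx : x ∈ hull 𝕜 (v '' s)) : ∃ i ∈ s, x ∈ hull 𝕜 (v '' (s.erase i)) := by
  obtain ⟨c, hc, rfl⟩ := mem_hull_image_finset_iff.mp hx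
  obtain ⟨g, hg, j, hj, hgj⟩ : ∃ g : ι → 𝕜, ∑ i ∈ s, g i • v i = 0 ∧ ∃ j ∈ s, 0 < g j := by
    obtain ⟨g, hg, j, hj, hgj⟩ := not_linearIndepOn_finset_iff.mp hs
    rcases hgj.lt_or_gt with hneg | hpos
    · exact ⟨-g, by simp [hg], j, hj, by simpa using hneg⟩
    · exact ⟨g, hg, j, hj, hpos⟩
  -- Subtract the largest multiple of the dependency `g` that keeps all coefficients nonnegative.
  obtain ⟨i, hi, hmin⟩ := Finset.exists_min_image (s.filter (0 < g ·)) (fun i ↦ c i / g i)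
    ⟨j, Finset.mem_filter.mpr ⟨hj, hgj⟩⟩
  rw [Finset.mem_filter] at hi
  set r := c i / g i
  have hr : 0 ≤ r := div_nonneg (hc i hi.1) hi.2.le
  refine ⟨i, hi.1, mem_hull_image_finset_iff.mpr ⟨fun k ↦ c k - r * g k, fun k hk ↦ ?_, ?_⟩⟩
  · have hks := Finset.mem_of_mem_erase hk
    rcases lt_or_ge 0 (g k) with hgk | hgk
    · have := hmin k (Finset.mem_filter.mpr ⟨hks, hgk⟩)
      rw [le_div_iff₀ hgk] at this
      linarith
    · nlinarith [hc k hks]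
  · have hri : c i - r * g i = 0 := by simp [r, div_mul_cancel₀ _ hi.2.ne']
    rw [Finset.sum_erase _ (by simp [hri])]
    simp only [sub_smul, Finset.sum_sub_distrib, mul_smul, ← Finset.smul_sum, hg, smul_zero,
      sub_zero]

theorem exists_linearIndepOn_of_mem_hull_image (hx : x ∈ hull 𝕜 (v '' s)) :
    ∃ t ⊆ s, LinearIndepOn 𝕜 v t ∧ x ∈ hull 𝕜 (v '' t) := by
  classical
  induction s using Finset.strongInduction with
  | H s ih =>
    by_cases hs : LinearIndepOn 𝕜 v s
    · exact ⟨s, subset_rfl, hs, hx⟩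
    · obtain ⟨i, hi, hx'⟩ := exists_mem_hull_image_erase hs hx
      obtain ⟨t, hts, ht, hxt⟩ := ih _ (Finset.erase_ssubset hi) hx'
      exact ⟨t, hts.trans (Finset.erase_subset _ _), ht, hxt⟩

end Caratheodory

section Closed

variable {F ι : Type*} [TopologicalSpace F] [AddCommGroup F] [Module ℝ F]
  [IsTopologicalAddGroup F] [ContinuousSMul ℝ F] [T2Space F] {v : ι → F}

theorem isClosed_hull_image_of_linearIndepOn {t : Finset ι} (ht : LinearIndepOn ℝ v t) :
    IsClosed (hull ℝ (v '' t) : Set F) := by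
  let T := Fintype.linearCombination ℝ fun i : t ↦ v i
  have hT : (hull ℝ (v '' t) : Set F) = T '' Set.Ici 0 := by
    ext x
    rw [SetLike.mem_coe, Submodule.mem_span_image_finset_iff_exists_fun]
    constructor
    · rintro ⟨c, rfl⟩
      exact ⟨fun i ↦ c i, fun i ↦ (c i).2, by simp [T, Fintype.linearCombination_apply]⟩
    · rintro ⟨c, hc, rfl⟩
      exact ⟨fun i ↦ ⟨c i, hc i⟩, by simp [T, Fintype.linearCombination_apply]⟩
  have hinj : LinearMap.ker T = ⊥ :=
    LinearMap.ker_eq_bot.mpr (linearIndependent_iff_injective_fintypeLinearCombination.mp ht)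
  rw [hT]
  exact (LinearMap.isClosedEmbedding_of_injective hinj).isClosedMap _ isClosed_Ici

theorem isClosed_hull_image_finset (v : ι → F) (s : Finset ι) :
    IsClosed (hull ℝ (v '' s) : Set F) := by
  classical
  let independent := s.powerset.filter fun t : Finset ι ↦ LinearIndepOn ℝ v (t : Set ι)
  have : (hull ℝ (v '' s) : Set F) =
      ⋃ (t : Finset ι) (_ : t ∈ independent), (hull ℝ (v '' t) : Set F) := by
    ext x
    simp only [SetLike.mem_coe, Set.mem_iUnion, independent, Finset.mem_filter,
      Finset.mem_powerset, exists_prop]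
    constructor
    · intro hx
      obtain ⟨t, hts, ht, hxt⟩ := exists_linearIndepOn_of_mem_hull_image hx
      exact ⟨t, ⟨hts, ht⟩, hxt⟩
    · rintro ⟨t, ⟨hts, -⟩, hxt⟩
      exact Submodule.span_mono (Set.image_mono hts) hxt
  rw [this]
  exact isClosed_biUnion_finset fun t ht ↦
    isClosed_hull_image_of_linearIndepOn (Finset.mem_filter.mp ht).2

theorem isClosed_hull_range [Finite ι] (v : ι → F) : IsClosed (hull ℝ (Set.range v) : Set F) := by
  have := Fintype.ofFinite ι
  simpa using isClosed_hull_image_finset v Finset.univ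

theorem exists_strongDual_of_notMem_hull_range [LocallyConvexSpace ℝ F] [Finite ι] {x₀ : F}
    (hx₀ : x₀ ∉ hull ℝ (Set.range v)) :
    ∃ f : StrongDual ℝ F, (∀ i, 0 ≤ f (v i)) ∧ f x₀ < 0 := by
  let C : ProperCone ℝ F := ⟨hull ℝ (Set.range v), isClosed_hull_range v⟩
  obtain ⟨f, hf, hfx₀⟩ := C.hyperplane_separation_point hx₀
  exact ⟨f, fun i ↦ hf _ (subset_hull ⟨i, rfl⟩), hfx₀⟩

end Closed

end PointedCone

open PointedCone in
theorem exists_strongDual_le_of_forall_sum_smul_eq_zero {F ι : Type*} [TopologicalSpace F]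
    [AddCommGroup F] [Module ℝ F] [IsTopologicalAddGroup F] [ContinuousSMul ℝ F] [T2Space F]
    [LocallyConvexSpace ℝ F] [Fintype ι] (b : ι → F) (c : ι → ℝ)
    (H : ∀ l : ι → ℝ, (∀ i, 0 ≤ l i) → ∑ i, l i • b i = 0 → 0 ≤ ∑ i, l i * c i) :
    ∃ g : StrongDual ℝ F, ∀ i, g (b i) ≤ c i := by
  -- A functional separating `(0, -1)` from the cone on `(0, 1)` and the `(-b i, c i)` gives `g`.
  let v : Option ι → F × ℝ := fun j ↦ j.elim (0, 1) fun i ↦ (-b i, c i)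
  have hv : ((0 : F), (-1 : ℝ)) ∉ hull ℝ (Set.range v) := by
    rw [mem_hull_range_iff]
    rintro ⟨l, hl, hsum⟩
    rw [Fintype.sum_option] at hsum
    have hb : ∑ i, l (some i) • b i = 0 := by
      simpa [v, Prod.fst_sum, Finset.sum_neg_distrib] using congrArg Prod.fst hsum
    have hc : l none + ∑ i, l (some i) * c i = -1 := by
      simpa [v, Prod.snd_sum] using congrArg Prod.snd hsum
    linarith [H _ (fun i ↦ hl _) hb, hl none]
  obtain ⟨f, hf, hf₀⟩ := exists_strongDual_of_notMem_hull_range hv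
  have hf_apply (x : F) (t : ℝ) : f (x, t) = f (x, 0) + t * f (0, 1) := by
    rw [← smul_eq_mul, ← map_smul, ← map_add, Prod.smul_mk, Prod.mk_add_mk]
    simp only [smul_zero, add_zero, zero_add, smul_eq_mul, mul_one]
  have hα : 0 < f (0, 1) := by
    have := hf_apply 0 (-1)
    rw [Prod.mk_zero_zero, map_zero] at this
    linarith
  refine ⟨(f (0, 1))⁻¹ • f.comp (ContinuousLinearMap.inl ℝ F ℝ), fun i ↦ ?_⟩
  have := hf (some i)
  change 0 ≤ f (-b i, c i) at this
  rw [hf_apply] at this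
  rw [smul_apply, smul_eq_mul, inv_mul_le_iff₀ hα]
  simp only [ContinuousLinearMap.comp_apply, ContinuousLinearMap.inl_apply]
  have : f (-b i, 0) = - f (b i, 0) := by rw [← map_neg, Prod.neg_mk, neg_zero]
  linarith

theorem exists_mem_orthogonal_forall_inner_add_le_one {E : Type*} [NormedAddCommGroup E]
    [InnerProductSpace ℝ E] [CompleteSpace E] {L : Submodule ℝ E} [L.HasOrthogonalProjection]
    {S : Set E} (hS : S.Finite) {z : E} (hz : ∀ y ∈ convexHull ℝ S ∩ L, ⟪z, y⟫ ≤ 1) :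
    ∃ w ∈ Lᗮ, ∀ s ∈ S, ⟪z + w, s⟫ ≤ 1 := by
  have := hS.fintype
  have H (l : S → ℝ) (hl : ∀ s, 0 ≤ l s) (hsum : ∑ s, l s • Lᗮ.starProjection s = 0) :
      0 ≤ ∑ s, l s * (1 - ⟪z, s⟫) := by
    rcases (Finset.sum_nonneg fun s _ ↦ hl s : 0 ≤ ∑ s, l s).eq_or_lt with hzero | hpos
    · have hl0 := (Finset.sum_eq_zero_iff_of_nonneg fun s _ ↦ hl s).mp hzero.symm
      simp [hl0]
    set y := Finset.univ.centerMass l fun s : S ↦ (s : E)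
    have hyS : y ∈ convexHull ℝ S :=
      Finset.centerMass_mem_convexHull _ (fun s _ ↦ hl s) hpos fun s _ ↦ s.2
    have hyL : y ∈ L := by
      rw [← L.orthogonal_orthogonal, ← Lᗮ.starProjection_apply_eq_zero_iff]
      simp only [y, Finset.centerMass, map_smul, map_sum, hsum, smul_zero]
    have hzy : ⟪z, y⟫ = (∑ s, l s)⁻¹ * ∑ s, l s * ⟪z, s⟫ := by
      simp only [y, Finset.centerMass, real_inner_smul_right, inner_sum]
    have := hz y ⟨hyS, hyL⟩
    rw [hzy, inv_mul_le_iff₀ hpos, mul_one] at this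
    simp only [mul_sub, mul_one, Finset.sum_sub_distrib]
    linarith
  obtain ⟨g, hg⟩ := exists_strongDual_le_of_forall_sum_smul_eq_zero _ _ H
  refine ⟨Lᗮ.starProjection ((InnerProductSpace.toDual ℝ E).symm g),
    Lᗮ.starProjection_apply_mem _, fun s hs ↦ ?_⟩
  have := hg ⟨s, hs⟩
  rw [inner_add_left, Submodule.inner_starProjection_left_eq_right,
    InnerProductSpace.toDual_symm_apply]
  linarith

theorem polarSet_convexHull {m : ℕ} (S : Set (EuclideanSpace ℝ (Fin m))) :
    polarSet (convexHull ℝ S) = polarSet S := by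
  ext x
  refine ⟨fun hx y hy ↦ hx y (subset_convexHull ℝ S hy), fun hx ↦ ?_⟩
  exact convexHull_min hx (convex_halfSpace_le (innerₛₗ ℝ x).isLinear 1)

theorem polar_proj_eq_polar_inter_general {m : ℕ} (S : Set (EuclideanSpace ℝ (Fin m)))
    (hS : S.Finite) (P : Set (EuclideanSpace ℝ (Fin m))) (hP : P = convexHull ℝ S)
    (L : Submodule ℝ (EuclideanSpace ℝ (Fin m))) :
    (fun x => ((Submodule.orthogonalProjection L x : EuclideanSpace ℝ (Fin m)))) '' polarSet P
      = polarSet (P ∩ (L : Set (EuclideanSpace ℝ (Fin m)))) ∩ (L : Set (EuclideanSpace ℝ (Fin m))) := by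
  subst hP
  ext z
  simp only [Submodule.coe_orthogonalProjectionOnto_apply]
  constructor
  · rintro ⟨x, hx, rfl⟩
    refine ⟨fun y ⟨hyP, hyL⟩ ↦ ?_, L.starProjection_apply_mem x⟩
    rw [Submodule.inner_starProjection_left_eq_right, Submodule.starProjection_eq_self_iff.mpr hyL]
    exact hx y hyP
  · rintro ⟨hz, hzL⟩
    obtain ⟨w, hw, hwS⟩ := exists_mem_orthogonal_forall_inner_add_le_one hS hz
    refine ⟨z + w, (polarSet_convexHull S).symm ▸ hwS, ?_⟩
    change L.starProjection (z + w) = z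
    rw [map_add, Submodule.starProjection_eq_self_iff.mpr hzL,
      (L.starProjection_apply_eq_zero_iff).mpr hw, add_zero]

theorem polar_proj_eq_polar_inter {m : ℕ} (S : Set (EuclideanSpace ℝ (Fin m)))
    (hS : S.Finite) (P : Set (EuclideanSpace ℝ (Fin m))) (hP : P = convexHull ℝ S)
    (h0 : (0 : EuclideanSpace ℝ (Fin m)) ∈ P) (L : Submodule ℝ (EuclideanSpace ℝ (Fin m))) :
    (fun x => ((Submodule.orthogonalProjection L x : EuclideanSpace ℝ (Fin m)))) '' polarSet P
      = polarSet (P ∩ (L : Set (EuclideanSpace ℝ (Fin m)))) ∩ (L : Set (EuclideanSpace ℝ (Fin m))) :=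
  polar_proj_eq_polar_inter_general S hS P hP L
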